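/- Let G be a discrete finitely generated group, Σ a finite alphabet, x ∈ Σ^G a Toeplitz array, and let (Γ_n)_{n≥0} be a period structure of x. Then there is an almost 1-1 factor map π from the Toeplitz system (Ω_G(x), G) onto the subodometer ←G = lim_{←n}(G/Γ_n, π_n) satisfying π^{-1}({e}) = {x}, where e ∈ ←G is the sequence of identity cosets; consequently ←G is the maximal equicontinuous factor of (Ω_G(x), G). -/

import Mathlib

open Pointwise MeasureTheory

/-- Compatibility condition defining the inverse limit `lim_{←i} (G/Γᵢ, πᵢ)`:
a sequence of cosets is compatible if any representative of the `(i+1)`-th coordinate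
also represents the `i`-th coordinate. -/
def Compat {G : Type*} [Group G] (Γ : ℕ → Subgroup G) (x : ∀ i, G ⧸ Γ i) : Prop :=
  ∀ (i : ℕ) (g : G),
    (QuotientGroup.mk g : G ⧸ Γ (i + 1)) = x (i + 1) →
    (QuotientGroup.mk g : G ⧸ Γ i) = x i

/-- The subodometer `←G = lim_{←i} (G/Γᵢ, πᵢ)` associated to a sequence of subgroups. -/
def Subodometer {G : Type*} [Group G] (Γ : ℕ → Subgroup G) : Type _ :=
  { x : ∀ i, G ⧸ Γ i // Compat Γ x }

/-- Topology of the subodometer: subspace topology of the product of the (discrete)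
coset spaces. -/
instance {G : Type*} [Group G] (Γ : ℕ → Subgroup G) [TopologicalSpace G] :
    TopologicalSpace (Subodometer Γ) :=
  instTopologicalSpaceSubtype

lemma compat_smul {G : Type*} [Group G] (Γ : ℕ → Subgroup G) (g : G) (x : ∀ i, G ⧸ Γ i)
    (hx : Compat Γ x) : Compat Γ (fun i => g • x i) := by
  intro i h hh
  change (QuotientGroup.mk h : G ⧸ Γ (i + 1)) = g • x (i + 1) at hh
  show (QuotientGroup.mk h : G ⧸ Γ i) = g • x i
  obtain ⟨a, ha⟩ := QuotientGroup.mk_surjective (x (i + 1))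
  have h1 : (QuotientGroup.mk (g * a) : G ⧸ Γ (i + 1)) = g • x (i + 1) := by
    rw [← ha]; rfl
  rw [← h1] at hh
  have h2 : (QuotientGroup.mk (g⁻¹ * h) : G ⧸ Γ (i + 1)) = QuotientGroup.mk a := by
    rw [QuotientGroup.eq] at hh ⊢
    simpa [mul_assoc] using hh
  have h3 := hx i _ (h2.trans ha)
  have h4 : (QuotientGroup.mk (g * (g⁻¹ * h)) : G ⧸ Γ i) = g • x i := by
    rw [show (QuotientGroup.mk (g * (g⁻¹ * h)) : G ⧸ Γ i)
        = g • (QuotientGroup.mk (g⁻¹ * h) : G ⧸ Γ i) from rfl, h3]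
  simpa [mul_assoc] using h4

/-- The action of `G` on the subodometer by coordinatewise left multiplication. -/
instance {G : Type*} [Group G] (Γ : ℕ → Subgroup G) : MulAction G (Subodometer Γ) where
  smul g x := ⟨fun i => g • x.1 i, compat_smul Γ g x.1 x.2⟩
  one_smul x := Subtype.ext (funext fun i => one_smul G (x.1 i))
  mul_smul g h x := Subtype.ext (funext fun i => mul_smul g h (x.1 i))

/-- The distinguished point `e` of the subodometer: the sequence of cosets of the
neutral element. -/
def odoE {G : Type*} [Group G] (Γ : ℕ → Subgroup G) (hΓ : ∀ i, Γ (i + 1) ≤ Γ i) :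
    Subodometer Γ :=
  ⟨fun i => QuotientGroup.mk 1, by
    intro i g hg
    rw [QuotientGroup.eq] at hg ⊢
    exact hΓ i hg⟩

/-- The canonical map `τ : G → ←G`, `τ(g) = (gΓᵢ)ᵢ`. -/
def odoTau {G : Type*} [Group G] (Γ : ℕ → Subgroup G) (hΓ : ∀ i, Γ (i + 1) ≤ Γ i) (g : G) :
    Subodometer Γ :=
  ⟨fun i => QuotientGroup.mk g, by
    intro i h hh
    rw [QuotientGroup.eq] at hh ⊢
    exact hΓ i hh⟩

/-- A factor map between two `G`-systems: a continuous surjection commuting with the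
`G`-actions. -/
def IsFactorMap (G : Type*) {X Y : Type*} [Group G] [TopologicalSpace X] [TopologicalSpace Y]
    [MulAction G X] [MulAction G Y] (π : X → Y) : Prop :=
  Continuous π ∧ Function.Surjective π ∧ ∀ (g : G) (x : X), π (g • x) = g • π x

/-- The (left) shift action of `G` on `K^G`: `(γ • x) g = x (g γ)`. -/
instance shiftMulAction (G K : Type*) [Group G] : MulAction G (G → K) where
  smul γ x := fun g => x (g * γ)
  one_smul x := funext fun g => congrArg x (mul_one g)
  mul_smul γ δ x := funext fun g => (congrArg x (mul_assoc g γ δ)).symm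

/-- `Per(x, Γ, σ) = {g ∈ G : x (g γ) = σ for all γ ∈ Γ}`. -/
def PerSet {G A : Type*} [Group G] (x : G → A) (Γ : Subgroup G) (σ : A) : Set G :=
  {g : G | ∀ γ ∈ Γ, x (g * γ) = σ}

/-- `Per(x, Γ) = ⋃_σ Per(x, Γ, σ)`. -/
def Per {G A : Type*} [Group G] (x : G → A) (Γ : Subgroup G) : Set G :=
  ⋃ σ : A, PerSet x Γ σ

/-- `x` is a `G`-Toeplitz array if every `g ∈ G` belongs to `Per(x, Γ)` for some
finite-index subgroup `Γ`. -/
def IsToeplitz {G A : Type*} [Group G] (x : G → A) : Prop :=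
  ∀ g : G, ∃ Γ : Subgroup G, Γ.FiniteIndex ∧ g ∈ Per x Γ

/-- `Γ` is an essential group of periods of `x`: every `g ∈ G` with
`Per(x, Γ, σ) ⊆ Per(g • x, Γ, σ)` for all `σ` belongs to `Γ`. -/
def IsEssentialPeriodGroup {G A : Type*} [Group G] (x : G → A) (Γ : Subgroup G) : Prop :=
  ∀ g : G, (∀ σ : A, PerSet x Γ σ ⊆ PerSet (g • x) Γ σ) → g ∈ Γ

/-- `Ω_G(x)`: the closure of the `G`-orbit of `x` in `A^G`. -/
def OmegaG (G : Type*) {A : Type*} [Group G] [TopologicalSpace A] (x : G → A) : Set (G → A) :=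
  closure (Set.range fun g : G => g • x)

lemma smul_mem_omegaG (G : Type*) {A : Type*} [Group G] [TopologicalSpace A] {x z : G → A}
    (g : G) (hz : z ∈ OmegaG G x) : g • z ∈ OmegaG G x := by
  unfold OmegaG at hz ⊢
  have hc : Continuous fun w : G → A => g • w := continuous_pi fun h => continuous_apply (h * g)
  have himg : (fun w : G → A => g • w) '' (Set.range fun h : G => h • x)
      = Set.range fun h : G => h • x := by
    ext w; constructor
    · rintro ⟨_, ⟨h, rfl⟩, rfl⟩
      refine ⟨g * h, ?_⟩
      show (g * h) • x = g • (h • x)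
      rw [mul_smul]
    · rintro ⟨h, rfl⟩
      refine ⟨(g⁻¹ * h) • x, ⟨g⁻¹ * h, rfl⟩, ?_⟩
      show g • ((g⁻¹ * h) • x) = h • x
      rw [← mul_smul, mul_inv_cancel_left]
  have h1 : g • z ∈ (fun w : G → A => g • w) '' closure (Set.range fun h : G => h • x) :=
    ⟨z, hz, rfl⟩
  have h2 := image_closure_subset_closure_image (f := fun w : G → A => g • w)
    (s := Set.range fun h : G => h • x) hc
  rw [himg] at h2
  exact h2 h1

lemma self_mem_omegaG (G : Type*) {A : Type*} [Group G] [TopologicalSpace A] (x : G → A) :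
    x ∈ OmegaG G x :=
  subset_closure ⟨1, one_smul G x⟩

/-- The subshift `Ω_G(x)` as a topological dynamical system. -/
def OmegaSub (G : Type*) {A : Type*} [Group G] [TopologicalSpace A] (x : G → A) : Type _ :=
  { z : G → A // z ∈ OmegaG G x }

instance (G : Type*) {A : Type*} [Group G] [TopologicalSpace A] (x : G → A) :
    TopologicalSpace (OmegaSub G x) :=
  instTopologicalSpaceSubtype

instance (G : Type*) {A : Type*} [Group G] [TopologicalSpace A] (x : G → A) :
    MulAction G (OmegaSub G x) where
  smul g z := ⟨g • z.1, smul_mem_omegaG G g z.2⟩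
  one_smul z := Subtype.ext (one_smul G z.1)
  mul_smul a b z := Subtype.ext (mul_smul a b z.1)

/-- An equicontinuous `G`-system on a metric space `Y`. -/
def IsEquicontinuousSystem (G Y : Type*) [Group G] [PseudoMetricSpace Y] [MulAction G Y] :
    Prop :=
  ∀ ε : ℝ, 0 < ε → ∃ δ : ℝ, 0 < δ ∧
    ∀ y z : Y, dist y z < δ → ∀ g : G, dist (g • y) (g • z) < ε


/-!
For `w ∈ Ω_G(x)` and a group of periods `Δ`, consider the shifts of `w` that agree with `x` on
the `Δ`-skeleton `Per(x, Δ)`. They form a union of left cosets of `Δ`, and each coset being among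
them is a closed condition on `w`; as `Δ` has finite index, "some coset" and "two distinct
cosets" are closed conditions too. The first holds on the orbit of `x`, hence on `Ω_G(x)`. Since
the skeleta exhaust `G`, every point of `Ω_G(x)` has `x` in its orbit closure, so the second
fails on `Ω_G(x)` because it fails at `x` when `Δ` is essential. Thus each `w ∈ Ω_G(x)` picks
one coset of every `Γₙ`: this is an equivariant continuous map to the subodometer, onto because
the image of `G` is dense. Points with the same image are carried to `x` by one common sequence
of shifts, so every equicontinuous factor identifies them.
-/

open Filter Topology Set

instance discreteTopology_quotient {G : Type*} [Group G] [TopologicalSpace G]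
    [DiscreteTopology G] (Δ : Subgroup G) : DiscreteTopology (G ⧸ Δ) :=
  discreteTopology_iff_isOpen_singleton.mpr fun _ => isOpen_coinduced.mpr (isOpen_discrete _)

structure IsPeriodStructure {G A : Type*} [Group G] (x : G → A) (Γ : ℕ → Subgroup G) :
    Prop where
  antitone : Antitone Γ
  finiteIndex : ∀ n, (Γ n).FiniteIndex
  essential : ∀ n, IsEssentialPeriodGroup x (Γ n)
  iUnion_per : ⋃ n, Per x (Γ n) = univ

lemma IsPeriodStructure.succ_le {G A : Type*} [Group G] {x : G → A} {Γ : ℕ → Subgroup G}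
    (hΓ : IsPeriodStructure x Γ) (i : ℕ) : Γ (i + 1) ≤ Γ i :=
  hΓ.antitone i.le_succ

section Topology

lemma isClosed_setOf_nonempty_of_finite {W F : Type*} [TopologicalSpace W] [Finite F]
    {C : W → Set F} (hC : ∀ q, IsClosed {w | q ∈ C w}) : IsClosed {w | (C w).Nonempty} := by
  have : {w | (C w).Nonempty} = ⋃ q, {w | q ∈ C w} := by ext; simp [Set.Nonempty]
  exact this ▸ isClosed_iUnion_of_finite hC

lemma isClosed_setOf_nontrivial_of_finite {W F : Type*} [TopologicalSpace W] [Finite F]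
    {C : W → Set F} (hC : ∀ q, IsClosed {w | q ∈ C w}) : IsClosed {w | (C w).Nontrivial} := by
  have : {w | (C w).Nontrivial} =
      ⋃ (q) (q') (_ : q ≠ q'), {w | q ∈ C w} ∩ {w | q' ∈ C w} := by
    ext
    simp only [Set.Nontrivial, mem_ofPred_eq, mem_iUnion, mem_inter_iff, exists_prop]
    tauto
  exact this ▸ isClosed_iUnion_of_finite fun q => isClosed_iUnion_of_finite fun q' =>
    isClosed_iUnion_of_finite fun _ => (hC q).inter (hC q')

lemma continuous_of_isClosed_preimage_singleton {X F : Type*} [TopologicalSpace X]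
    [TopologicalSpace F] [DiscreteTopology F] [Finite F] {f : X → F}
    (hf : ∀ q, IsClosed (f ⁻¹' {q})) : Continuous f :=
  continuous_iff_isClosed.2 fun s _ =>
    biUnion_preimage_singleton f s ▸ (toFinite s).isClosed_biUnion fun q _ => hf q

end Topology

section Skeleton

variable {G A : Type*} [Group G] {x w : G → A} {Δ Δ' : Subgroup G}

@[simp]
lemma shift_apply (g k : G) (w : G → A) : (g • w) k = w (k * g) := rfl

lemma apply_mul_eq_of_mem_per {k δ : G} (hk : k ∈ Per x Δ) (hδ : δ ∈ Δ) :
    x (k * δ) = x k := by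
  obtain ⟨σ, hσ⟩ := mem_iUnion.1 hk
  simpa using (hσ δ hδ).trans (hσ 1 Δ.one_mem).symm

lemma mul_mem_per {k δ : G} (hk : k ∈ Per x Δ) (hδ : δ ∈ Δ) : k * δ ∈ Per x Δ := by
  obtain ⟨σ, hσ⟩ := mem_iUnion.1 hk
  refine mem_iUnion.2 ⟨σ, fun γ hγ => ?_⟩
  simpa [mul_assoc] using hσ (δ * γ) (Δ.mul_mem hδ hγ)

lemma per_anti (h : Δ' ≤ Δ) : Per x Δ ⊆ Per x Δ' :=
  iUnion_mono fun _ _ hg γ hγ => hg γ (h hγ)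

def skeletonShifts (x : G → A) (Δ : Subgroup G) (w : G → A) : Set G :=
  {g | EqOn (g⁻¹ • w) x (Per x Δ)}

lemma mul_mem_skeletonShifts {g δ : G} (hg : g ∈ skeletonShifts x Δ w) (hδ : δ ∈ Δ) :
    g * δ ∈ skeletonShifts x Δ w := fun k hk => by
  have := hg (mul_mem_per hk (Δ.inv_mem hδ))
  simp only [shift_apply, mul_inv_rev, ← mul_assoc] at this ⊢
  rw [this, apply_mul_eq_of_mem_per hk (Δ.inv_mem hδ)]

lemma mem_skeletonShifts_smul {g u : G} :
    g ∈ skeletonShifts x Δ (u • w) ↔ u⁻¹ * g ∈ skeletonShifts x Δ w := by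
  simp only [skeletonShifts, mem_ofPred_eq, ← mul_smul, mul_inv_rev, inv_inv]

lemma one_mem_skeletonShifts_self : 1 ∈ skeletonShifts x Δ x := by
  simp [skeletonShifts, EqOn]

lemma skeletonShifts_self (hess : IsEssentialPeriodGroup x Δ) :
    skeletonShifts x Δ x = Δ := by
  refine Subset.antisymm (fun g hg => ?_) fun g hg => ?_
  · refine Δ.inv_mem_iff.1 (hess g⁻¹ fun σ k hk δ hδ => ?_)
    rw [hg (mul_mem_per (mem_iUnion.2 ⟨σ, hk⟩) hδ)]
    exact hk δ hδ
  · simpa using mul_mem_skeletonShifts one_mem_skeletonShifts_self hg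

lemma skeletonShifts_anti (h : Δ' ≤ Δ) : skeletonShifts x Δ' w ⊆ skeletonShifts x Δ w :=
  fun _ hg => hg.mono (per_anti h)

lemma isClosed_setOf_mem_skeletonShifts [TopologicalSpace A] [T2Space A] (g : G) :
    IsClosed {w | g ∈ skeletonShifts x Δ w} := by
  have : {w | g ∈ skeletonShifts x Δ w} =
      ⋂ k ∈ Per x Δ, {w : G → A | w (k * g⁻¹) = x k} := by
    ext; simp [skeletonShifts, EqOn]
  exact this ▸ isClosed_biInter fun k _ => isClosed_eq (continuous_apply _) continuous_const

def skeletonCosets (x : G → A) (Δ : Subgroup G) (w : G → A) : Set (G ⧸ Δ) :=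
  QuotientGroup.mk '' skeletonShifts x Δ w

lemma mk_mem_skeletonCosets {g : G} :
    (g : G ⧸ Δ) ∈ skeletonCosets x Δ w ↔ g ∈ skeletonShifts x Δ w := by
  refine ⟨?_, mem_image_of_mem _⟩
  rintro ⟨g', hg', hgg'⟩
  simpa using mul_mem_skeletonShifts hg' (QuotientGroup.eq.1 hgg')

lemma smul_mem_skeletonCosets_smul {u : G} {q : G ⧸ Δ} :
    u • q ∈ skeletonCosets x Δ (u • w) ↔ q ∈ skeletonCosets x Δ w := by
  induction q using QuotientGroup.induction_on with
  | H g => simp [MulAction.Quotient.smul_mk, mk_mem_skeletonCosets, mem_skeletonShifts_smul]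

lemma skeletonCosets_self (hess : IsEssentialPeriodGroup x Δ) :
    skeletonCosets x Δ x = {((1 : G) : G ⧸ Δ)} := by
  ext q
  induction q using QuotientGroup.induction_on with
  | H g => simp [mk_mem_skeletonCosets, skeletonShifts_self hess, QuotientGroup.eq]

lemma isClosed_setOf_mem_skeletonCosets [TopologicalSpace A] [T2Space A] (q : G ⧸ Δ) :
    IsClosed {w | q ∈ skeletonCosets x Δ w} := by
  obtain ⟨g, rfl⟩ := QuotientGroup.mk_surjective q
  simpa only [mk_mem_skeletonCosets] using isClosed_setOf_mem_skeletonShifts g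

lemma skeletonCosets_nonempty [TopologicalSpace A] [T2Space A] [Δ.FiniteIndex]
    (hw : w ∈ OmegaG G x) : (skeletonCosets x Δ w).Nonempty := by
  refine closure_minimal ?_ (isClosed_setOf_nonempty_of_finite
    isClosed_setOf_mem_skeletonCosets) hw
  rintro _ ⟨u, rfl⟩
  refine ⟨u • ((1 : G) : G ⧸ Δ), smul_mem_skeletonCosets_smul.2 ?_⟩
  exact mk_mem_skeletonCosets.2 one_mem_skeletonShifts_self

end Skeleton

section PeriodStructure

variable {G A : Type*} [Group G] [TopologicalSpace A] {x : G → A} {Γ : ℕ → Subgroup G}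

lemma tendsto_inv_smul_of_mem_skeletonShifts (hanti : Antitone Γ)
    (hcover : ⋃ n, Per x (Γ n) = univ) {w : G → A} {g : ℕ → G}
    (hg : ∀ n, g n ∈ skeletonShifts x (Γ n) w) :
    Tendsto (fun n => (g n)⁻¹ • w) atTop (𝓝 x) := by
  refine tendsto_pi_nhds.2 fun k => ?_
  obtain ⟨n₀, hk⟩ := mem_iUnion.1 (hcover ▸ mem_univ k)
  exact tendsto_atTop_of_eventually_const fun n hn => hg n (per_anti (hanti hn) hk)

lemma mem_closure_orbit_of_mem_omegaG [T2Space A] (hΓ : IsPeriodStructure x Γ) {w : G → A}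
    (hw : w ∈ OmegaG G x) : x ∈ closure (range fun u : G => u • w) := by
  have hne n : (skeletonShifts x (Γ n) w).Nonempty :=
    have := hΓ.finiteIndex n
    image_nonempty.1 (skeletonCosets_nonempty hw)
  choose g hg using hne
  exact mem_closure_of_tendsto
    (tendsto_inv_smul_of_mem_skeletonShifts hΓ.antitone hΓ.iUnion_per hg)
    (Eventually.of_forall fun n => mem_range_self _)

lemma skeletonCosets_subsingleton [T2Space A] (hΓ : IsPeriodStructure x Γ) {w : G → A}
    (hw : w ∈ OmegaG G x) (n : ℕ) : (skeletonCosets x (Γ n) w).Subsingleton := by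
  have := hΓ.finiteIndex n
  rw [← not_nontrivial_iff]
  intro hnt
  have horbit : range (fun u : G => u • w) ⊆ {v | (skeletonCosets x (Γ n) v).Nontrivial} := by
    rintro _ ⟨u, rfl⟩
    obtain ⟨q, hq, q', hq', hne⟩ := hnt
    exact ⟨u • q, smul_mem_skeletonCosets_smul.2 hq, u • q',
      smul_mem_skeletonCosets_smul.2 hq', (smul_left_cancel_iff u).not.2 hne⟩
  have hx := closure_minimal horbit (isClosed_setOf_nontrivial_of_finite
    isClosed_setOf_mem_skeletonCosets) (mem_closure_orbit_of_mem_omegaG hΓ hw)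
  rw [mem_ofPred_eq, skeletonCosets_self (hΓ.essential n)] at hx
  exact not_nontrivial_singleton hx

/-- Junk value `Classical.epsilon` when the set is empty, which does not happen on `Ω_G(x)`. -/
noncomputable def skeletonCoset (x : G → A) (Δ : Subgroup G) (w : G → A) : G ⧸ Δ :=
  Classical.epsilon (· ∈ skeletonCosets x Δ w)

lemma skeletonCoset_eq_iff [T2Space A] (hΓ : IsPeriodStructure x Γ) {w : G → A}
    (hw : w ∈ OmegaG G x) {n : ℕ} {q : G ⧸ Γ n} :
    skeletonCoset x (Γ n) w = q ↔ q ∈ skeletonCosets x (Γ n) w := by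
  have := hΓ.finiteIndex n
  have hmem := Classical.epsilon_spec (skeletonCosets_nonempty (x := x) (Δ := Γ n) hw)
  exact ⟨fun h => h ▸ hmem, fun hq => skeletonCosets_subsingleton hΓ hw n hmem hq⟩

lemma compat_skeletonCoset [T2Space A] (hΓ : IsPeriodStructure x Γ) {w : G → A}
    (hw : w ∈ OmegaG G x) : Compat Γ fun n => skeletonCoset x (Γ n) w := by
  intro n g hg
  rw [eq_comm, skeletonCoset_eq_iff hΓ hw, mk_mem_skeletonCosets] at hg ⊢
  exact skeletonShifts_anti (hΓ.succ_le n) hg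

end PeriodStructure

section Subodometer

variable {G : Type*} [Group G] {Γ : ℕ → Subgroup G}

lemma Compat.mk_eq_of_le {y : ∀ i, G ⧸ Γ i} (hy : Compat Γ y) {g : G} {N : ℕ}
    (hN : (g : G ⧸ Γ N) = y N) {i : ℕ} (hi : i ≤ N) : (g : G ⧸ Γ i) = y i := by
  induction N with
  | zero => exact Nat.le_zero.1 hi ▸ hN
  | succ N ih =>
    rcases Nat.of_le_succ hi with hi | rfl
    exacts [ih (hy N g hN) hi, hN]

lemma denseRange_odoTau [TopologicalSpace G] (hΓ : ∀ i, Γ (i + 1) ≤ Γ i) :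
    DenseRange (odoTau Γ hΓ) := fun y =>
  mem_closure_of_tendsto
    (tendsto_subtype_rng.2 <| tendsto_pi_nhds.2 fun _ => tendsto_atTop_of_eventually_const
      fun N hN => y.2.mk_eq_of_le (QuotientGroup.out_eq' (y.1 N)) hN)
    (Eventually.of_forall fun _ => mem_range_self _)

lemma smul_odoE (hΓ : ∀ i, Γ (i + 1) ≤ Γ i) (u : G) : u • odoE Γ hΓ = odoTau Γ hΓ u :=
  Subtype.ext <| funext fun _ => congrArg QuotientGroup.mk (mul_one u)

instance [TopologicalSpace G] [DiscreteTopology G] : T2Space (Subodometer Γ) :=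
  inferInstanceAs (T2Space {y // Compat Γ y})

end Subodometer

section OdometerMap

variable {G A : Type*} [Group G] [TopologicalSpace A] [T2Space A] {x : G → A}
  {Γ : ℕ → Subgroup G}

def OmegaSub.basePoint (x : G → A) : OmegaSub G x :=
  ⟨x, self_mem_omegaG G x⟩

noncomputable def odometerMap (hΓ : IsPeriodStructure x Γ) : OmegaSub G x → Subodometer Γ :=
  fun z => ⟨fun n => skeletonCoset x (Γ n) z.1, compat_skeletonCoset hΓ z.2⟩

lemma odometerMap_apply_eq_iff (hΓ : IsPeriodStructure x Γ) (z : OmegaSub G x) {n : ℕ}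
    {q : G ⧸ Γ n} :
    (odometerMap hΓ z).1 n = q ↔ q ∈ skeletonCosets x (Γ n) z.1 :=
  skeletonCoset_eq_iff hΓ z.2

lemma odometerMap_smul (hΓ : IsPeriodStructure x Γ) (u : G) (z : OmegaSub G x) :
    odometerMap hΓ (u • z) = u • odometerMap hΓ z := by
  refine Subtype.ext <| funext fun n => (odometerMap_apply_eq_iff hΓ _).2 ?_
  exact smul_mem_skeletonCosets_smul.2 ((odometerMap_apply_eq_iff hΓ z).1 rfl)

lemma odometerMap_self (hΓ : IsPeriodStructure x Γ) :
    odometerMap hΓ (OmegaSub.basePoint x) = odoE Γ hΓ.succ_le :=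
  Subtype.ext <| funext fun _ => (odometerMap_apply_eq_iff hΓ _).2 <|
    mk_mem_skeletonCosets.2 one_mem_skeletonShifts_self

lemma odometerMap_smul_self (hΓ : IsPeriodStructure x Γ) (u : G) :
    odometerMap hΓ (u • OmegaSub.basePoint x) = odoTau Γ hΓ.succ_le u := by
  rw [odometerMap_smul, odometerMap_self, smul_odoE]

lemma continuous_odometerMap [TopologicalSpace G] [DiscreteTopology G]
    (hΓ : IsPeriodStructure x Γ) : Continuous (odometerMap hΓ) := by
  refine (continuous_pi fun n => ?_).subtype_mk _
  have := hΓ.finiteIndex n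
  refine continuous_of_isClosed_preimage_singleton fun q => ?_
  have hfiber : (fun z => (odometerMap hΓ z).1 n) ⁻¹' {q} =
      Subtype.val ⁻¹' {w | q ∈ skeletonCosets x (Γ n) w} :=
    ext fun z => odometerMap_apply_eq_iff hΓ z
  exact hfiber ▸ (isClosed_setOf_mem_skeletonCosets q).preimage continuous_subtype_val

instance [Finite A] [DiscreteTopology A] : CompactSpace (OmegaSub G x) :=
  isCompact_iff_compactSpace.1 isClosed_closure.isCompact

lemma surjective_odometerMap [Finite A] [DiscreteTopology A] [TopologicalSpace G]
    [DiscreteTopology G] (hΓ : IsPeriodStructure x Γ) :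
    Function.Surjective (odometerMap hΓ) := by
  have hclosed := (isCompact_range (continuous_odometerMap hΓ)).isClosed
  have horbit : range (odoTau Γ hΓ.succ_le) ⊆ range (odometerMap hΓ) := by
    rintro _ ⟨u, rfl⟩
    exact ⟨_, odometerMap_smul_self hΓ u⟩
  exact fun y => hclosed.closure_subset_iff.2 horbit (denseRange_odoTau _ y)

lemma tendsto_inv_smul_out_odometerMap (hΓ : IsPeriodStructure x Γ) (z : OmegaSub G x) :
    Tendsto (fun n => ((odometerMap hΓ z).1 n).out⁻¹ • z) atTop
      (𝓝 (OmegaSub.basePoint x)) :=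
  tendsto_subtype_rng.2 <| tendsto_inv_smul_of_mem_skeletonShifts hΓ.antitone hΓ.iUnion_per
    fun n => mk_mem_skeletonCosets.1 <|
      (odometerMap_apply_eq_iff hΓ z).1 (QuotientGroup.out_eq' ((odometerMap hΓ z).1 n)).symm

lemma preimage_odometerMap_odoE (hΓ : IsPeriodStructure x Γ) :
    odometerMap hΓ ⁻¹' {odoE Γ hΓ.succ_le} = {OmegaSub.basePoint x} := by
  refine Subset.antisymm (fun z hz => ?_) (singleton_subset_iff.2 (odometerMap_self hΓ))
  have hone n : (1 : G) ∈ skeletonShifts x (Γ n) z.1 :=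
    mk_mem_skeletonCosets.1 <| (odometerMap_apply_eq_iff hΓ z).1 (congrArg (·.1 n) hz)
  have := tendsto_inv_smul_of_mem_skeletonShifts hΓ.antitone hΓ.iUnion_per hone
  simp only [inv_one, one_smul] at this
  exact Subtype.ext (tendsto_const_nhds_iff.1 this)

lemma exists_tendsto_smul_of_odometerMap_eq (hΓ : IsPeriodStructure x Γ) {z z' : OmegaSub G x}
    (h : odometerMap hΓ z = odometerMap hΓ z') :
    ∃ g : ℕ → G, Tendsto (fun n => g n • z) atTop (𝓝 (OmegaSub.basePoint x)) ∧
      Tendsto (fun n => g n • z') atTop (𝓝 (OmegaSub.basePoint x)) :=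
  ⟨_, tendsto_inv_smul_out_odometerMap hΓ z, h ▸ tendsto_inv_smul_out_odometerMap hΓ z'⟩

end OdometerMap

lemma IsEquicontinuousSystem.eq_of_tendsto_smul {G Y ι : Type*} [Group G] [MetricSpace Y]
    [MulAction G Y] (hY : IsEquicontinuousSystem G Y) {l : Filter ι} [l.NeBot] {g : ι → G}
    {y y' p : Y} (h : Tendsto (fun i => g i • y) l (𝓝 p))
    (h' : Tendsto (fun i => g i • y') l (𝓝 p)) : y = y' := by
  by_contra hne
  obtain ⟨δ, hδ, hδε⟩ := hY _ (dist_pos.2 hne)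
  have hclose : Tendsto (fun i => dist (g i • y) (g i • y')) l (𝓝 0) := by
    simpa using h.dist h'
  obtain ⟨i, hi⟩ := (hclose.eventually (gt_mem_nhds hδ)).exists
  simpa using hδε _ _ hi (g i)⁻¹

lemma IsFactorMap.exists_comp_eq {G X Y Z : Type*} [Group G] [TopologicalSpace X]
    [CompactSpace X] [TopologicalSpace Y] [TopologicalSpace Z] [T2Space Z] [MulAction G X]
    [MulAction G Y] [MulAction G Z] {π : X → Z} (hπ : IsFactorMap G π) {q : X → Y}
    (hq : IsFactorMap G q) (hfib : ∀ a b, π a = π b → q a = q b) :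
    ∃ ψ : Z → Y, IsFactorMap G ψ ∧ ψ ∘ π = q := by
  obtain ⟨hπc, hπs, hπe⟩ := hπ
  have hquot : Topology.IsQuotientMap (ContinuousMap.mk π hπc) :=
    hπc.isClosedMap.isQuotientMap hπc hπs
  set ψ := hquot.lift ⟨q, hq.1⟩ hfib
  have hψπ : ψ ∘ π = q := congrArg DFunLike.coe (hquot.lift_comp ⟨q, hq.1⟩ hfib)
  refine ⟨ψ, ⟨ψ.continuous, .of_comp (hψπ ▸ hq.2.1), fun g z => ?_⟩, hψπ⟩
  obtain ⟨a, rfl⟩ := hπs z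
  rw [← hπe, ← Function.comp_apply (f := ψ), hψπ, hq.2.2, ← hψπ, Function.comp_apply]

theorem statement18_general {G A : Type*} [Group G] [TopologicalSpace G]
    [DiscreteTopology G] [Finite A] [TopologicalSpace A] [DiscreteTopology A]
    (x : G → A)
    (Γ : ℕ → Subgroup G) (hdec : ∀ n, Γ (n + 1) ≤ Γ n) (hfin : ∀ n, (Γ n).FiniteIndex)
    (hess : ∀ n, IsEssentialPeriodGroup x (Γ n))
    (hcover : (⋃ n, Per x (Γ n)) = Set.univ) :
    ∃ π : OmegaSub G x → Subodometer Γ,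
      IsFactorMap G π ∧
      π ⁻¹' {odoE Γ hdec} = {(⟨x, self_mem_omegaG G x⟩ : OmegaSub G x)} ∧
      ∀ (Y : Type) (_ : MetricSpace Y) (_ : MulAction G Y),
        (∀ g : G, Continuous fun y : Y => g • y) →
        IsEquicontinuousSystem G Y →
        ∀ q : OmegaSub G x → Y, IsFactorMap G q →
          ∃ ψ : Subodometer Γ → Y, IsFactorMap G ψ ∧ ψ ∘ π = q := by
  have hΓ : IsPeriodStructure x Γ := ⟨antitone_nat_of_succ_le hdec, hfin, hess, hcover⟩
  have hπ : IsFactorMap G (odometerMap hΓ) :=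
    ⟨continuous_odometerMap hΓ, surjective_odometerMap hΓ, odometerMap_smul hΓ⟩
  refine ⟨odometerMap hΓ, hπ, preimage_odometerMap_odoE hΓ, fun Y _ _ _ hY q hq => ?_⟩
  refine hπ.exists_comp_eq hq fun z z' hzz' => ?_
  obtain ⟨g, hz, hz'⟩ := exists_tendsto_smul_of_odometerMap_eq hΓ hzz'
  have hqlim {w} (hw : Tendsto (fun n => g n • w) atTop (𝓝 (OmegaSub.basePoint x))) :
      Tendsto (fun n => g n • q w) atTop (𝓝 (q (OmegaSub.basePoint x))) := by
    simpa only [Function.comp_def, hq.2.2] using (hq.1.tendsto _).comp hw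
  exact hY.eq_of_tendsto_smul (hqlim hz) (hqlim hz')

/-- Proposition `eqfactor`: if `(Γₙ)` is a period structure of the
Toeplitz array `x`, then there is an almost 1-1 factor map `π : Ω_G(x) → ←G` with
`π⁻¹(e) = {x}`; consequently the subodometer `←G` is the maximal equicontinuous factor
of `(Ω_G(x), G)`. -/
theorem statement18 {G A : Type*} [Group G] [Group.FG G] [TopologicalSpace G]
    [DiscreteTopology G] [Finite A] [TopologicalSpace A] [DiscreteTopology A]
    (x : G → A) (hx : IsToeplitz x)
    (Γ : ℕ → Subgroup G) (hdec : ∀ n, Γ (n + 1) ≤ Γ n) (hfin : ∀ n, (Γ n).FiniteIndex)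
    (hess : ∀ n, IsEssentialPeriodGroup x (Γ n))
    (hcover : (⋃ n, Per x (Γ n)) = Set.univ) :
    ∃ π : OmegaSub G x → Subodometer Γ,
      IsFactorMap G π ∧
      π ⁻¹' {odoE Γ hdec} = {(⟨x, self_mem_omegaG G x⟩ : OmegaSub G x)} ∧
      ∀ (Y : Type) (_ : MetricSpace Y) (_ : MulAction G Y),
        (∀ g : G, Continuous fun y : Y => g • y) →
        IsEquicontinuousSystem G Y →
        ∀ q : OmegaSub G x → Y, IsFactorMap G q →
          ∃ ψ : Subodometer Γ → Y, IsFactorMap G ψ ∧ ψ ∘ π = q :=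
  statement18_general x Γ hdec hfin hess hcover
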